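/- Let (Y,τ) be a Hausdorff space possessing a locally strict Sorgenfrey base that has strict branches. Then (Y,τ) is homeomorphic to the space (ℕ → ℕ, σ_𝕊). -/

import Mathlib

/-!
Strict branches give a map `q ↦ the unique point of fruit(V, q)` from the Baire set to `Y`.
Local strictness makes it injective (two branches through one point split at some level into
disjoint sets) and covering makes it surjective (every point lies on some branch). By (S2) each
`q` is a base branch of its image, so the map sends the `σ_𝕊`-neighbourhood base
`cut(S, q, m) ∪ {q} = rsequences(q, m) ∪ {q}` at `q` onto the base `cut(V, q, m) ∪ {x}` at its
image `x`: it maps neighbourhood filters onto neighbourhood filters, hence is a homeomorphism.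
-/

open Set Filter Topology TopologicalSpace Function

noncomputable section

/-- The Sorgenfrey topology on `ℝ`: generated by half-open intervals `[a, b)`. -/
def sorgenfreyTop : TopologicalSpace ℝ :=
  TopologicalSpace.generateFrom {s : Set ℝ | ∃ a b : ℝ, s = Set.Ico a b}

/-- The initial segment `p↾n` of an infinite sequence, as a list. -/
def restr (p : ℕ → ℕ) (n : ℕ) : List ℕ := (List.range n).map p

/-- `fruit V p = ⋂ n, V (p↾n)`. -/
def fruit {X : Type*} (V : List ℕ → Set X) (p : ℕ → ℕ) : Set X := ⋂ n, V (restr p n)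

/-- A Souslin scheme is covering if `V ⟨⟩ = X` and `V a = ⋃ n, V (a ⌢ n)`. -/
def Covering {X : Type*} (V : List ℕ → Set X) : Prop :=
  V [] = Set.univ ∧ ∀ a : List ℕ, V a = ⋃ n : ℕ, V (a ++ [n])

/-- A Souslin scheme is complete if every fruit is nonempty. -/
def CompleteScheme {X : Type*} (V : List ℕ → Set X) : Prop :=
  ∀ q : ℕ → ℕ, (fruit V q).Nonempty

/-- A Souslin scheme has strict branches if every fruit is a singleton. -/
def StrictBranches {X : Type*} (V : List ℕ → Set X) : Prop :=
  ∀ q : ℕ → ℕ, ∃ x : X, fruit V q = {x}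

/-- A Souslin scheme is locally strict. -/
def LocallyStrict {X : Type*} (V : List ℕ → Set X) : Prop :=
  (∀ a : List ℕ, V a = ⋃ n : ℕ, V (a ++ [n])) ∧
  ∀ a : List ℕ, ∀ m k : ℕ, m ≠ k → V (a ++ [m]) ∩ V (a ++ [k]) = ∅

/-- `q ◁ p` for infinite sequences: `q↾n = p↾n` and `q n < p n` for some `n`. -/
def tri (q p : ℕ → ℕ) : Prop := ∃ n : ℕ, restr q n = restr p n ∧ q n < p n

/-- `q ⊴ p` for infinite sequences. -/
def trieq (q p : ℕ → ℕ) : Prop := tri q p ∨ q = p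

/-- `q ◁ s` where `q` is an infinite sequence and `s` a finite one. -/
def triL (q : ℕ → ℕ) (s : List ℕ) : Prop :=
  ∃ n : ℕ, ∃ h : n < s.length, restr q n = s.take n ∧ q n < s.get ⟨n, h⟩

/-- `rsequences(q, n) = {p | q ◁ p ∧ q↾n = p↾n}`. -/
def rsequences (q : ℕ → ℕ) (n : ℕ) : Set (ℕ → ℕ) :=
  {p | tri q p ∧ restr q n = restr p n}

/-- `rsubtree(q, n)`: finite sequences `s` such that `q↾n ⊏ s` and `q ◁ s`. -/
def rsubtree (q : ℕ → ℕ) (n : ℕ) : Set (List ℕ) :=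
  {s | restr q n <+: s ∧ restr q n ≠ s ∧ triL q s}

/-- `cut(V, q, n) = ⋃ {fruit(V, p) : p ∈ rsequences(q, n)}`. -/
def cut {X : Type*} (V : List ℕ → Set X) (q : ℕ → ℕ) (n : ℕ) : Set X :=
  ⋃ p ∈ rsequences q n, fruit V p

/-- `branches(V, x) = {q | x ∈ fruit(V, q)}`. -/
def branches {X : Type*} (V : List ℕ → Set X) (x : X) : Set (ℕ → ℕ) :=
  {q | x ∈ fruit V q}

/-- `q` is a `τ`-base branch of `x` in `V`: `q ∈ branches(V, x)` and
`{cut(V, q, m) ∪ {x} : m ∈ ℕ}` is a neighborhood base of open sets at `x`. -/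
def IsBaseBranch {X : Type*} (τ : TopologicalSpace X) (V : List ℕ → Set X)
    (q : ℕ → ℕ) (x : X) : Prop :=
  x ∈ fruit V q ∧ (∀ m : ℕ, IsOpen[τ] (cut V q m ∪ {x})) ∧
    (@nhds X τ x).HasBasis (fun _ : ℕ => True) (fun m : ℕ => cut V q m ∪ {x})

/-- `BB(V, x, τ)`: the set of `τ`-base branches of `x` in `V`. -/
def BB {X : Type*} (τ : TopologicalSpace X) (V : List ℕ → Set X) (x : X) : Set (ℕ → ℕ) :=
  {q | IsBaseBranch τ V q x}

/-- A Sorgenfrey base for a space: an open complete covering Souslin scheme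
satisfying (S1) and (S2). -/
def IsSorgenfreyBase {X : Type*} (τ : TopologicalSpace X) (V : List ℕ → Set X) : Prop :=
  (∀ a : List ℕ, IsOpen[τ] (V a)) ∧ CompleteScheme V ∧ Covering V ∧
  (∀ x : X, ∀ q ∈ branches V x, ∀ n : ℕ, ∃ t ∈ BB τ V x, restr t n = restr q n) ∧
  (∀ q : ℕ → ℕ, ∃ z : X, q ∈ BB τ V z)

/-- The Souslin scheme `S` on the Baire set: `S a = {p | a ⊑ p}`. -/
def SchemeS (a : List ℕ) : Set (ℕ → ℕ) := {p | restr p a.length = a}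

/-- The topology `σ_𝕊` on `ℕ → ℕ` generated by the base
`{cut(S, p, n) ∪ {p} : p ∈ ℕ → ℕ, n ∈ ℕ}`. -/
def sigmaS : TopologicalSpace (ℕ → ℕ) :=
  TopologicalSpace.generateFrom
    {U : Set (ℕ → ℕ) | ∃ p : ℕ → ℕ, ∃ n : ℕ, U = cut SchemeS p n ∪ {p}}

lemma restr_succ (p : ℕ → ℕ) (n : ℕ) : restr p (n + 1) = restr p n ++ [p n] := by
  simp [restr, List.range_succ]

lemma restr_eq_restr_iff {p q : ℕ → ℕ} {n : ℕ} :
    restr p n = restr q n ↔ ∀ k < n, p k = q k := by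
  simp [restr, List.map_inj_left]

lemma eq_of_forall_restr_eq {p q : ℕ → ℕ} (h : ∀ n, restr p n = restr q n) : p = q :=
  funext fun k => restr_eq_restr_iff.1 (h (k + 1)) k k.lt_succ_self

lemma fruit_schemeS (q : ℕ → ℕ) : fruit SchemeS q = {q} := by
  ext p
  simp only [fruit, mem_iInter, SchemeS, mem_ofPred_eq, restr, List.length_map,
    List.length_range, mem_singleton_iff]
  exact ⟨eq_of_forall_restr_eq, fun h _ => h ▸ rfl⟩

lemma cut_schemeS (q : ℕ → ℕ) (n : ℕ) : cut SchemeS q n = rsequences q n := by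
  ext p
  simp [cut, fruit_schemeS]

lemma rsequences_antitone (q : ℕ → ℕ) : Antitone (rsequences q) := by
  rintro n m hnm p ⟨hqp, hpm⟩
  exact ⟨hqp, restr_eq_restr_iff.2 fun k hk => restr_eq_restr_iff.1 hpm k (hk.trans_le hnm)⟩

lemma exists_rsequences_subset_of_mem {p q : ℕ → ℕ} {n : ℕ} (hq : q ∈ rsequences p n) :
    ∃ m, rsequences q m ⊆ rsequences p n := by
  obtain ⟨⟨k, hpq, hk⟩, hpqn⟩ := hq
  refine ⟨max (k + 1) n, fun r ⟨_, hqr⟩ => ?_⟩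
  have hqr : ∀ j, j < k + 1 ∨ j < n → q j = r j := fun j hj =>
    restr_eq_restr_iff.1 hqr j (lt_max_iff.2 hj)
  refine ⟨⟨k, ?_, hqr k (.inl k.lt_succ_self) ▸ hk⟩, ?_⟩
  · exact hpq.trans (restr_eq_restr_iff.2 fun j hj => hqr j (.inl (hj.trans k.lt_succ_self)))
  · exact hpqn.trans (restr_eq_restr_iff.2 fun j hj => hqr j (.inr hj))

lemma nhds_sigmaS_hasBasis (q : ℕ → ℕ) :
    (@nhds _ sigmaS q).HasBasis (fun _ : ℕ => True) (fun m => rsequences q m ∪ {q}) := by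
  have hnhds : @nhds _ sigmaS q = ⨅ m : ℕ, 𝓟 (rsequences q m ∪ {q}) := by
    rw [sigmaS, nhds_generateFrom]
    refine le_antisymm (le_iInf fun m => iInf₂_le _ ⟨.inr rfl, q, m, by rw [cut_schemeS]⟩) ?_
    refine le_iInf₂ fun s hs => ?_
    obtain ⟨hqs, p, n, rfl⟩ := hs
    rw [cut_schemeS] at hqs ⊢
    rcases hqs with hqs | rfl
    · obtain ⟨m, hm⟩ := exists_rsequences_subset_of_mem hqs
      exact iInf_le_of_le m <| principal_mono.2 <|
        union_subset (hm.trans subset_union_left) (singleton_subset_iff.2 (.inl hqs))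
    · exact iInf_le _ n
  rw [hnhds]
  exact hasBasis_iInf_principal <| directed_of_isDirected_le fun i j hij =>
    union_subset_union_left _ (rsequences_antitone q hij)

def Equiv.toHomeomorphOfMapNhdsEq {X Y : Type*} [TopologicalSpace X] [TopologicalSpace Y]
    (e : X ≃ Y) (he : ∀ x, map e (𝓝 x) = 𝓝 (e x)) : X ≃ₜ Y :=
  e.toHomeomorphOfContinuousOpen (continuous_iff_continuousAt.2 fun x => (he x).le)
    (IsOpenMap.of_nhds_le fun x => (he x).ge)

section SouslinScheme

variable {X : Type*} {V : List ℕ → Set X}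

lemma LocallyStrict.eq_of_mem_fruit (hls : LocallyStrict V) {x : X} {p q : ℕ → ℕ}
    (hp : x ∈ fruit V p) (hq : x ∈ fruit V q) : p = q := by
  refine eq_of_forall_restr_eq fun n => ?_
  induction n with
  | zero => rfl
  | succ n ih =>
    have hpn : x ∈ V (restr q n ++ [p n]) := ih ▸ restr_succ p n ▸ mem_iInter.1 hp (n + 1)
    have hqn : x ∈ V (restr q n ++ [q n]) := restr_succ q n ▸ mem_iInter.1 hq (n + 1)
    have hpqn : p n = q n := by
      by_contra hne
      exact eq_empty_iff_forall_notMem.1 (hls.2 _ _ _ hne) x ⟨hpn, hqn⟩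
    rw [restr_succ, restr_succ, ih, hpqn]

lemma Covering.exists_mem_fruit (hcov : Covering V) (x : X) : ∃ q, x ∈ fruit V q := by
  have hstep : ∀ a : List ℕ, ∃ c : ℕ, x ∈ V a → x ∈ V (a ++ [c]) := fun a => by
    by_cases ha : x ∈ V a
    · obtain ⟨c, hc⟩ := mem_iUnion.1 (hcov.2 a ▸ ha)
      exact ⟨c, fun _ => hc⟩
    · exact ⟨0, fun h => absurd h ha⟩
  choose c hc using hstep
  let l : ℕ → List ℕ := fun n => (fun a => a ++ [c a])^[n] []
  have hl : ∀ n, l (n + 1) = l n ++ [c (l n)] := fun n => iterate_succ_apply' _ n []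
  have hrestr : ∀ n, restr (fun n => c (l n)) n = l n := by
    intro n
    induction n with
    | zero => rfl
    | succ n ih => rw [restr_succ, ih, hl]
  have hmem : ∀ n, x ∈ V (l n) := by
    intro n
    induction n with
    | zero => exact hcov.1 ▸ mem_univ x
    | succ n ih => exact hl n ▸ hc _ ih
  exact ⟨fun n => c (l n), mem_iInter.2 fun n => hrestr n ▸ hmem n⟩

namespace StrictBranches

variable (hsb : StrictBranches V)

def point (q : ℕ → ℕ) : X := (hsb q).choose

lemma mem_fruit_iff {x : X} {q : ℕ → ℕ} : x ∈ fruit V q ↔ x = hsb.point q := by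
  rw [(hsb q).choose_spec, mem_singleton_iff, point]

lemma point_mem_fruit (q : ℕ → ℕ) : hsb.point q ∈ fruit V q :=
  hsb.mem_fruit_iff.2 rfl

lemma point_bijective (hls : LocallyStrict V) (hcov : Covering V) : Bijective hsb.point :=
  ⟨fun p q h => hls.eq_of_mem_fruit (hsb.point_mem_fruit p) (h ▸ hsb.point_mem_fruit q),
    fun x => (hcov.exists_mem_fruit x).imp fun _ hq => (hsb.mem_fruit_iff.1 hq).symm⟩

lemma image_point_rsequences (q : ℕ → ℕ) (m : ℕ) :
    hsb.point '' rsequences q m = cut V q m := by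
  ext x
  simp [cut, hsb.mem_fruit_iff, eq_comm]

lemma isBaseBranch_point {τ : TopologicalSpace X} (hS2 : ∀ q, ∃ z, q ∈ BB τ V z)
    (q : ℕ → ℕ) : IsBaseBranch τ V q (hsb.point q) := by
  obtain ⟨z, hz⟩ := hS2 q
  rwa [← hsb.mem_fruit_iff.1 hz.1]

lemma map_nhds_point {τ : TopologicalSpace X} (hS2 : ∀ q, ∃ z, q ∈ BB τ V z)
    (q : ℕ → ℕ) : map hsb.point (@nhds _ sigmaS q) = @nhds X τ (hsb.point q) := by
  refine ((nhds_sigmaS_hasBasis q).map hsb.point).eq_of_same_basis ?_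
  simpa only [image_union, image_singleton, image_point_rsequences]
    using (hsb.isBaseBranch_point hS2 q).2.2

end StrictBranches

end SouslinScheme

theorem stmt5_general {Y : Type*} (τ : TopologicalSpace Y)
    (V : List ℕ → Set Y) (hV : IsSorgenfreyBase τ V)
    (hls : LocallyStrict V) (hsb : StrictBranches V) :
    Nonempty (@Homeomorph Y (ℕ → ℕ) τ sigmaS) := by
  obtain ⟨-, -, hcov, -, hS2⟩ := hV
  let _ := τ
  let _ := sigmaS
  exact ⟨(Equiv.toHomeomorphOfMapNhdsEq (Equiv.ofBijective _ (hsb.point_bijective hls hcov))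
    (hsb.map_nhds_point hS2)).symm⟩

/-- A Hausdorff space with a locally strict Sorgenfrey base with strict branches
is homeomorphic to `(ℕ → ℕ, σ_𝕊)`. -/
theorem stmt5 {Y : Type*} (τ : TopologicalSpace Y) (hT2 : @T2Space Y τ)
    (V : List ℕ → Set Y) (hV : IsSorgenfreyBase τ V)
    (hls : LocallyStrict V) (hsb : StrictBranches V) :
    Nonempty (@Homeomorph Y (ℕ → ℕ) τ sigmaS) :=
  stmt5_general τ V hV hls hsb
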